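/- The map T ↦ ⟦T⟧ from digital trees over a digit space (X,E) to nonempty compact subsets of X is surjective, and its restriction to full trees (trees T such that [T] is closed under the relation α ∼ β ⟺ ⟦α⟧ = ⟦β⟧) is injective: for full trees T₁, T₂, ⟦T₁⟧ = ⟦T₂⟧ iff T₁ = T₂. -/
import Mathlib


/-- `seqComp α n` is the composition `α 0 ∘ α 1 ∘ ⋯ ∘ α (n-1)`. -/
def seqComp {X : Type*} (α : ℕ → X → X) : ℕ → X → X
  | 0 => id
  | n + 1 => seqComp α n ∘ α n

/-- A digital tree: a nonempty set of finite digit sequences, downward closed under the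
prefix order, with no maximal elements. -/
def DigitalTree {E : Type*} (T : Set (List E)) : Prop :=
  T.Nonempty ∧ (∀ l m : List E, l <+: m → m ∈ T → l ∈ T) ∧
    ∀ l ∈ T, ∃ e : E, l ++ [e] ∈ T

/-- `α` is an infinite path of the tree `T`. -/
def IsPathOf {E : Type*} (T : Set (List E)) (α : ℕ → E) : Prop :=
  ∀ n : ℕ, (List.ofFn fun i : Fin n => α i) ∈ T

/-- The value of a tree: the set of values of its infinite paths under the coding map. -/
def treeVal {X : Type*} (val : (ℕ → X → X) → X) (T : Set (List (X → X))) : Set X :=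
  {x | ∃ α : ℕ → X → X, IsPathOf T α ∧ val α = x}

/-- `T` is full: its path set is closed under the relation `α ∼ β ⟺ val α = val β`. -/
def IsFullTree {X : Type*} (E : Finset (X → X)) (val : (ℕ → X → X) → X)
    (T : Set (List (X → X))) : Prop :=
  ∀ α : ℕ → X → X, IsPathOf T α → ∀ β : ℕ → X → X, (∀ n, β n ∈ E) →
    val β = val α → IsPathOf T β

namespace Stmt19Aux

variable {X : Type*}

def listComp (l : List (X → X)) : X → X := l.foldr (· ∘ ·) id

lemma listComp_append (l r : List (X → X)) :
    listComp (l ++ r) = listComp l ∘ listComp r := by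
  induction l with
  | nil => rfl
  | cons a l ih =>
    show a ∘ listComp (l ++ r) = (a ∘ listComp l) ∘ listComp r
    rw [ih]; rfl

lemma listComp_ofFn (α : ℕ → X → X) (n : ℕ) :
    listComp (List.ofFn fun i : Fin n => α i) = seqComp α n := by
  induction n with
  | zero => rfl
  | succ n ih =>
    rw [List.ofFn_succ' (fun i : Fin (n+1) => α i), List.concat_eq_append, listComp_append]
    have h1 : (List.ofFn fun i : Fin n => α ((i.castSucc : Fin (n+1)) : ℕ)) =
        List.ofFn fun i : Fin n => α i := by
      congr 1
    rw [h1, ih]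
    rfl

/-- Extending a node of a digital tree to a full infinite path through it. -/
lemma extend_path {T : Set (List (X → X))} (hT : DigitalTree T)
    {l : List (X → X)} (hl : l ∈ T) :
    ∃ α : ℕ → X → X, IsPathOf T α ∧
      (∀ n, ∃ m ∈ T, (m.getD n id = α n ∧ n < m.length)) ∧
      (List.ofFn fun i : Fin l.length => α i) = l := by
  classical
  have hext : ∀ m : {m // m ∈ T}, ∃ e : X → X, (m : List (X → X)) ++ [e] ∈ T :=
    fun m => hT.2.2 m m.2
  let ext : {m // m ∈ T} → {m // m ∈ T} := fun m =>
    ⟨(m : List (X → X)) ++ [(hext m).choose], (hext m).choose_spec⟩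
  let M : ℕ → {m // m ∈ T} := fun n => ext^[n] ⟨l, hl⟩
  have hMsucc : ∀ n, (M (n+1) : List (X → X)) = (M n : List (X → X)) ++ [(hext (M n)).choose] := by
    intro n
    show ((ext^[n+1] ⟨l, hl⟩ : {m // m ∈ T}) : List (X → X)) = _
    rw [Function.iterate_succ_apply']
  have hMlen : ∀ n, (M n : List (X → X)).length = l.length + n := by
    intro n
    induction n with
    | zero => rfl
    | succ n ih => rw [hMsucc n, List.length_append, ih]; rfl
  have hMpref : ∀ k k', k ≤ k' → (M k : List (X → X)) <+: (M k' : List (X → X)) := by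
    intro k k' hk
    induction k' with
    | zero => obtain rfl := Nat.le_zero.mp hk; exact List.prefix_refl _
    | succ k' ih =>
      rcases Nat.lt_or_ge k (k'+1) with h | h
      · exact (ih (Nat.lt_succ_iff.mp h)).trans (by rw [hMsucc k']; exact List.prefix_append _ _)
      · have : k = k' + 1 := le_antisymm hk h
        subst this; exact List.prefix_refl _
  let α : ℕ → X → X := fun n => (M (n+1) : List (X → X)).getD n id
  have hαdef : ∀ n, α n = (M (n+1) : List (X → X)).getD n id := fun _ => rfl
  have hkey : ∀ n k, n < k → (M k : List (X → X)).getD n id = α n := by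
    intro n k hnk
    obtain ⟨t, ht⟩ := hMpref (n+1) k hnk
    have hn1 : n < (M (n+1) : List (X → X)).length := by rw [hMlen]; omega
    rw [hαdef]
    rw [← ht, List.getD_eq_getElem _ _ (by rw [List.length_append]; omega),
      List.getD_eq_getElem _ _ hn1, List.getElem_append_left]
  have hofFn : ∀ n, (List.ofFn fun i : Fin n => α i) = (M n : List (X → X)).take n := by
    intro n
    apply List.ext_getElem
    · simp [hMlen n]
    · intro i h1 h2
      have hi : i < n := by simpa using h1
      have hMi : i < (M n : List (X → X)).length := by rw [hMlen]; omega
      rw [List.getElem_ofFn, List.getElem_take]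
      rw [← hkey i n hi, List.getD_eq_getElem _ _ hMi]
  refine ⟨α, ?_, ?_, ?_⟩
  · intro n
    rw [hofFn n]
    exact hT.2.1 _ _ (List.take_prefix _ _) (M n).2
  · intro n
    exact ⟨(M (n+1) : List (X → X)), (M (n+1)).2, hkey n (n+1) (Nat.lt_succ_self n),
      by rw [hMlen]; omega⟩
  · rw [hofFn]
    obtain ⟨t, ht⟩ := hMpref 0 l.length (Nat.zero_le _)
    have : (M 0 : List (X → X)) = l := rfl
    rw [this] at ht
    rw [← ht, List.take_left]

lemma mem_of_treeVal_subset {E : Finset (X → X)} {val : (ℕ → X → X) → X}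
    {T₁ T₂ : Set (List (X → X))}
    (h₁ : DigitalTree T₁) (hE₁ : ∀ l ∈ T₁, ∀ e ∈ l, e ∈ E)
    (h₂full : IsFullTree E val T₂)
    (h : treeVal val T₁ ⊆ treeVal val T₂) : T₁ ⊆ T₂ := by
  intro l hl
  obtain ⟨α, hαpath, hαmem, hαl⟩ := extend_path h₁ hl
  have hαE : ∀ n, α n ∈ E := by
    intro n
    obtain ⟨m, hmT, hget, hlt⟩ := hαmem n
    rw [← hget, List.getD_eq_getElem _ _ hlt]
    exact hE₁ m hmT _ (List.getElem_mem _)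
  have hv : val α ∈ treeVal val T₂ := h ⟨α, hαpath, rfl⟩
  obtain ⟨β, hβpath, hβval⟩ := hv
  have hαT₂ : IsPathOf T₂ α := h₂full β hβpath α hαE hβval.symm
  have := hαT₂ l.length
  rwa [hαl] at this

end Stmt19Aux

open Stmt19Aux Metric Filter in
/-- For a digit space `(X, E)` with coding map `val`: the map `T ↦ ⟦T⟧` from digital
trees over `E` to nonempty compact subsets of `X` is surjective, and its restriction to
full trees is injective: for full trees `T₁, T₂`, `⟦T₁⟧ = ⟦T₂⟧` iff `T₁ = T₂`. -/
theorem stmt19 {X : Type*} [MetricSpace X] [CompactSpace X] [Nonempty X]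
    (E : Finset (X → X))
    (hcontr : ∀ e ∈ E, ∃ K : NNReal, ContractingWith K e)
    (hcover : ∀ x : X, ∃ e ∈ E, x ∈ Set.range e)
    (val : (ℕ → X → X) → X)
    (hval : ∀ α : ℕ → X → X, (∀ n, α n ∈ E) → ∀ n, val α ∈ Set.range (seqComp α n)) :
    (∀ C : Set X, IsCompact C → C.Nonempty →
      ∃ T : Set (List (X → X)), DigitalTree T ∧ (∀ l ∈ T, ∀ e ∈ l, e ∈ E) ∧
        treeVal val T = C) ∧
    (∀ T₁ T₂ : Set (List (X → X)),
      DigitalTree T₁ → (∀ l ∈ T₁, ∀ e ∈ l, e ∈ E) → IsFullTree E val T₁ →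
      DigitalTree T₂ → (∀ l ∈ T₂, ∀ e ∈ l, e ∈ E) → IsFullTree E val T₂ →
      (treeVal val T₁ = treeVal val T₂ ↔ T₁ = T₂)) := by
  classical
  -- uniform contraction ratio
  let r : (X → X) → NNReal := fun e => if h : e ∈ E then (hcontr e h).choose else 0
  have hr : ∀ e ∈ E, ContractingWith (r e) e := by
    intro e he
    simpa only [r, dif_pos he] using (hcontr e he).choose_spec
  let K : NNReal := E.sup r
  have hK1 : K < 1 := by
    rw [Finset.sup_lt_iff (by norm_num : (⊥ : NNReal) < 1)]
    exact fun e he => (hr e he).1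
  have hKe : ∀ e ∈ E, LipschitzWith K e :=
    fun e he => ((hr e he).2).weaken (Finset.le_sup he)
  have hlip : ∀ (α : ℕ → X → X), (∀ n, α n ∈ E) → ∀ n, LipschitzWith (K ^ n) (seqComp α n) := by
    intro α hα n
    induction n with
    | zero => simpa [seqComp] using LipschitzWith.id (α := X)
    | succ n ih =>
      rw [pow_succ]
      exact ih.comp (hKe _ (hα n))
  set D : ℝ := diam (Set.univ : Set X) with hD
  have hdist : ∀ (α : ℕ → X → X), (∀ n, α n ∈ E) → ∀ n, ∀ x ∈ Set.range (seqComp α n),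
      ∀ y ∈ Set.range (seqComp α n), dist x y ≤ (K : ℝ) ^ n * D := by
    intro α hα n x hx y hy
    have hb : Bornology.IsBounded (Set.range (seqComp α n)) :=
      (isCompact_univ.isBounded).subset (Set.subset_univ _)
    calc dist x y ≤ diam (Set.range (seqComp α n)) := dist_le_diam_of_mem hb hx hy
    _ = diam (seqComp α n '' Set.univ) := by rw [Set.image_univ]
    _ ≤ (K ^ n : NNReal) * D := (hlip α hα n).diam_image_le _ isCompact_univ.isBounded
    _ = (K : ℝ) ^ n * D := by push_cast; ring
  have htend : Tendsto (fun n : ℕ => (K : ℝ) ^ n * D) atTop (nhds 0) := by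
    have := (tendsto_pow_atTop_nhds_zero_of_lt_one (K.coe_nonneg) (by exact_mod_cast hK1)).mul_const D
    simpa using this
  have heq : ∀ (α : ℕ → X → X), (∀ n, α n ∈ E) →
      ∀ x y : X, (∀ n, x ∈ Set.range (seqComp α n)) → (∀ n, y ∈ Set.range (seqComp α n)) →
      x = y := by
    intro α hα x y hx hy
    have : dist x y ≤ 0 :=
      ge_of_tendsto htend (Filter.Eventually.of_forall fun n => hdist α hα n x (hx n) y (hy n))
    exact dist_le_zero.mp this
  constructor
  · -- surjectivity
    intro C hC hCne
    refine ⟨{l | (∀ e ∈ l, e ∈ E) ∧ ∃ x ∈ C, x ∈ Set.range (listComp l)}, ?_, ?_, ?_⟩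
    · refine ⟨⟨[], ?_⟩, ?_, ?_⟩
      · exact ⟨by simp, hCne.choose, hCne.choose_spec, hCne.choose, rfl⟩
      · rintro l m ⟨t, rfl⟩ ⟨hmE, x, hxC, hx⟩
        refine ⟨fun e he => hmE e (by simp [he]), x, hxC, ?_⟩
        rw [listComp_append] at hx
        exact Set.range_comp_subset_range _ _ hx
      · rintro l ⟨hlE, x, hxC, y, hy⟩
        obtain ⟨e, heE, z, hz⟩ := hcover y
        refine ⟨e, fun f hf => ?_, x, hxC, z, ?_⟩
        · rcases List.mem_append.mp hf with h | h
          · exact hlE f h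
          · simp at h; subst h; exact heE
        · rw [listComp_append]
          show listComp l (e (id z)) = x
          simp only [id_eq]
          rw [hz, hy]
    · exact fun l hl => hl.1
    · apply Set.Subset.antisymm
      · rintro x ⟨α, hαpath, rfl⟩
        have hαE : ∀ n, α n ∈ E := by
          intro n
          refine (hαpath (n+1)).1 (α n) ?_
          rw [List.mem_ofFn]
          exact ⟨⟨n, Nat.lt_succ_self n⟩, rfl⟩
        rw [← hC.isClosed.closure_eq]
        rw [Metric.mem_closure_iff]
        intro ε hε
        obtain ⟨n, hn⟩ := (htend.eventually (gt_mem_nhds hε)).exists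
        obtain ⟨_, xn, hxnC, hxn⟩ := hαpath n
        rw [listComp_ofFn] at hxn
        exact ⟨xn, hxnC, lt_of_le_of_lt
          (hdist α hαE n _ (hval α hαE n) xn hxn) hn⟩
      · intro x hx
        have hg : ∀ y : X, ∃ p : (X → X) × X, p.1 ∈ E ∧ p.1 p.2 = y := by
          intro y
          obtain ⟨e, he, z, hz⟩ := hcover y
          exact ⟨(e, z), he, hz⟩
        let g : X → (X → X) × X := fun y => (hg y).choose
        have hg1 : ∀ y, (g y).1 ∈ E := fun y => (hg y).choose_spec.1
        have hg2 : ∀ y, (g y).1 ((g y).2) = y := fun y => (hg y).choose_spec.2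
        let y : ℕ → X := fun n => (fun z => (g z).2)^[n] x
        have hysucc : ∀ n, y (n+1) = (g (y n)).2 := by
          intro n
          show (fun z => (g z).2)^[n+1] x = _
          rw [Function.iterate_succ_apply']
        let α : ℕ → X → X := fun n => (g (y n)).1
        have hαE : ∀ n, α n ∈ E := fun n => hg1 (y n)
        have hstep : ∀ n, α n (y (n+1)) = y n := by
          intro n; rw [hysucc n]; exact hg2 (y n)
        have hseq : ∀ n, seqComp α n (y n) = x := by
          intro n
          induction n with
          | zero => rfl
          | succ n ih =>
            show seqComp α n (α n (y (n+1))) = x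
            rw [hstep n, ih]
        have hxr : ∀ n, x ∈ Set.range (seqComp α n) := fun n => ⟨y n, hseq n⟩
        have hαpath : IsPathOf {l | (∀ e ∈ l, e ∈ E) ∧ ∃ x ∈ C, x ∈ Set.range (listComp l)} α := by
          intro n
          refine ⟨?_, x, hx, ?_⟩
          · intro e he
            rw [List.mem_ofFn] at he
            obtain ⟨i, rfl⟩ := he
            exact hαE i
          · rw [listComp_ofFn]; exact hxr n
        exact ⟨α, hαpath, heq α hαE (val α) x (fun n => hval α hαE n) hxr⟩
  · -- injectivity on full trees
    intro T₁ T₂ h₁ hE₁ hfull₁ h₂ hE₂ hfull₂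
    constructor
    · intro h
      exact Set.Subset.antisymm
        (mem_of_treeVal_subset h₁ hE₁ hfull₂ h.subset)
        (mem_of_treeVal_subset h₂ hE₂ hfull₁ h.symm.subset)
    · rintro rfl; rfl
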